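/- The fair coalition number of the triangular prism graph K₃ □ K₂ (the Cartesian product of the triangle with an edge) equals 6. -/

import Mathlib

open SimpleGraph

/-- `D` is a fair dominating set of `G`: it is a dominating set and there is some
`k ≥ 1` such that every vertex outside `D` has exactly `k` neighbors in `D`. -/
def IsFairDomSet {V : Type*} (G : SimpleGraph V) (D : Set V) : Prop :=
  (∀ v ∉ D, ∃ u ∈ D, G.Adj v u) ∧
  ∃ k : ℕ, 1 ≤ k ∧ ∀ v ∉ D, (G.neighborSet v ∩ D).ncard = k

/-- A fair coalition partition of `G`: a partition of the vertex set into nonempty parts,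
each of which is either a singleton fair dominating set, or is not a fair dominating set
but forms a fair coalition with another part that is not a fair dominating set. -/
def IsFairCoalitionPartition {V : Type*} (G : SimpleGraph V) (P : Finset (Set V)) : Prop :=
  (∀ A ∈ P, A.Nonempty) ∧
  (P : Set (Set V)).PairwiseDisjoint id ∧
  ⋃₀ (P : Set (Set V)) = Set.univ ∧
  ∀ A ∈ P, ((∃ v, A = {v}) ∧ IsFairDomSet G A) ∨
    (¬ IsFairDomSet G A ∧ ∃ B ∈ P, B ≠ A ∧ ¬ IsFairDomSet G B ∧ IsFairDomSet G (A ∪ B))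

/-- The fair coalition number of `G`: the maximum number of parts in a fair
coalition partition of `G`. -/
noncomputable def fairCoalitionNumber {V : Type*} (G : SimpleGraph V) : ℕ :=
  sSup {n | ∃ P : Finset (Set V), IsFairCoalitionPartition G P ∧ P.card = n}

/-!
Singletons never dominate, since in a box product of two nontrivial graphs the vertex
`(a, b)` has a non-neighbour `(a', b')` with `a' ≠ a` and `b' ≠ b`. On the other hand each
fibre `{u} × Fin 2` of `⊤ □ H` is a `1`-fair dominating set: a vertex `(w, b)` with `w ≠ u` is
adjacent to exactly one vertex of it, namely `(u, b)`. So the two singletons of a fibre form a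
fair coalition, the partition into singletons is a fair coalition partition, and no partition
into nonempty parts can have more parts than there are vertices.
-/

section General

variable {V : Type*} (G : SimpleGraph V)

theorem IsFairCoalitionPartition.card_le [Fintype V] {P : Finset (Set V)}
    (hP : IsFairCoalitionPartition G P) : P.card ≤ Fintype.card V := by
  classical
  obtain ⟨hne, hdisj, -, -⟩ := hP
  calc P.card ≤ (P.biUnion fun A ↦ A.toFinset).card :=
        Finset.card_le_card_biUnion (f := fun A ↦ A.toFinset)
          (fun A hA B hB hAB ↦ Set.disjoint_toFinset.mpr (hdisj hA hB hAB))
          (fun A hA ↦ Set.toFinset_nonempty.mpr (hne A hA))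
    _ ≤ Fintype.card V := Finset.card_le_univ _

theorem fairCoalitionNumber_eq_card [Fintype V] {P : Finset (Set V)}
    (hP : IsFairCoalitionPartition G P) (hcard : P.card = Fintype.card V) :
    fairCoalitionNumber G = Fintype.card V := by
  have hmem : Fintype.card V ∈
      {n | ∃ P : Finset (Set V), IsFairCoalitionPartition G P ∧ P.card = n} := ⟨P, hP, hcard⟩
  have hbound : ∀ n ∈ {n | ∃ P : Finset (Set V), IsFairCoalitionPartition G P ∧ P.card = n},
      n ≤ Fintype.card V := by
    rintro n ⟨Q, hQ, rfl⟩
    exact hQ.card_le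
  exact le_antisymm (csSup_le ⟨_, hmem⟩ hbound) (le_csSup ⟨_, hbound⟩ hmem)

open Classical in
noncomputable def singletonParts (V : Type*) [Fintype V] : Finset (Set V) :=
  Finset.univ.image fun v : V ↦ {v}

@[simp]
theorem mem_singletonParts [Fintype V] {A : Set V} : A ∈ singletonParts V ↔ ∃ v, A = {v} := by
  simp [singletonParts, eq_comm]

theorem card_singletonParts [Fintype V] : (singletonParts V).card = Fintype.card V := by
  rw [singletonParts, Finset.card_image_of_injective _ Set.singleton_injective, Finset.card_univ]

theorem isFairCoalitionPartition_singletonParts [Fintype V]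
    (h_single : ∀ v, ¬ IsFairDomSet G {v}) (h_pair : ∀ v, ∃ w ≠ v, IsFairDomSet G {v, w}) :
    IsFairCoalitionPartition G (singletonParts V) := by
  refine ⟨?_, ?_, ?_, ?_⟩
  · rintro _ hA
    obtain ⟨v, rfl⟩ := mem_singletonParts.mp hA
    exact Set.singleton_nonempty v
  · rintro _ hA _ hB hAB
    obtain ⟨v, rfl⟩ := mem_singletonParts.mp hA
    obtain ⟨w, rfl⟩ := mem_singletonParts.mp hB
    exact Set.disjoint_singleton.mpr fun hvw ↦ hAB (hvw ▸ rfl)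
  · exact Set.eq_univ_of_forall fun v ↦ ⟨{v}, mem_singletonParts.mpr ⟨v, rfl⟩, rfl⟩
  · rintro _ hA
    obtain ⟨v, rfl⟩ := mem_singletonParts.mp hA
    obtain ⟨w, hwv, hvw⟩ := h_pair v
    refine .inr ⟨h_single v, {w}, mem_singletonParts.mpr ⟨w, rfl⟩,
      fun h ↦ hwv (Set.singleton_injective h), h_single w, ?_⟩
    rwa [Set.singleton_union]

theorem fairCoalitionNumber_eq_card_of_pairs [Fintype V]
    (h_single : ∀ v, ¬ IsFairDomSet G {v}) (h_pair : ∀ v, ∃ w ≠ v, IsFairDomSet G {v, w}) :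
    fairCoalitionNumber G = Fintype.card V :=
  fairCoalitionNumber_eq_card G (isFairCoalitionPartition_singletonParts G h_single h_pair)
    card_singletonParts

end General

section BoxProd

variable {α β : Type*}

theorem not_isFairDomSet_singleton_boxProd [Nontrivial α] [Nontrivial β]
    (G : SimpleGraph α) (H : SimpleGraph β) (v : α × β) : ¬ IsFairDomSet (G □ H) {v} := by
  obtain ⟨a, ha⟩ := exists_ne v.1
  obtain ⟨b, hb⟩ := exists_ne v.2
  rintro ⟨hdom, -⟩
  obtain ⟨w, rfl, hadj⟩ := hdom (a, b) fun h ↦ ha (congrArg Prod.fst h)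
  rcases boxProd_adj.mp hadj with ⟨-, h⟩ | ⟨-, h⟩
  exacts [hb h, ha h]

theorem neighborSet_top_boxProd_inter_fiber (H : SimpleGraph β) {u : α} {v : α × β}
    (hv : v.1 ≠ u) : ((⊤ : SimpleGraph α) □ H).neighborSet v ∩ {x | x.1 = u} = {(u, v.2)} := by
  ext ⟨a, b⟩
  simp only [Set.mem_inter_iff, mem_neighborSet, boxProd_adj, top_adj, Set.mem_ofPred_eq,
    Set.mem_singleton_iff, Prod.mk.injEq]
  constructor
  · rintro ⟨⟨-, h⟩ | ⟨-, h⟩, rfl⟩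
    exacts [⟨rfl, h.symm⟩, absurd h hv]
  · rintro ⟨rfl, rfl⟩
    exact ⟨.inl ⟨hv, rfl⟩, rfl⟩

theorem isFairDomSet_top_boxProd_fiber (H : SimpleGraph β) (u : α) :
    IsFairDomSet ((⊤ : SimpleGraph α) □ H) {x | x.1 = u} := by
  have hnbr := fun v (hv : v ∉ {x : α × β | x.1 = u}) ↦ neighborSet_top_boxProd_inter_fiber H hv
  refine ⟨fun v hv ↦ ?_, 1, le_rfl, fun v hv ↦ by rw [hnbr v hv, Set.ncard_singleton]⟩
  obtain ⟨hadj, hmem⟩ : (u, v.2) ∈ ((⊤ : SimpleGraph α) □ H).neighborSet v ∩ {x | x.1 = u} :=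
    hnbr v hv ▸ rfl
  exact ⟨_, hmem, hadj⟩

theorem pair_snd_rev_eq_setOf_fst_eq (v : α × Fin 2) : {v, (v.1, v.2.rev)} = {x : α × Fin 2 | x.1 = v.1} := by
  obtain ⟨a, b⟩ := v
  ext ⟨c, d⟩
  simp only [Set.mem_insert_iff, Set.mem_singleton_iff, Set.mem_ofPred_eq, Prod.mk.injEq]
  fin_cases b <;> fin_cases d <;> simp

theorem fairCoalitionNumber_top_boxProd_fin_two [Fintype α] [Nontrivial α]
    (H : SimpleGraph (Fin 2)) :
    fairCoalitionNumber ((⊤ : SimpleGraph α) □ H) = Fintype.card α * 2 := by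
  rw [fairCoalitionNumber_eq_card_of_pairs _ (not_isFairDomSet_singleton_boxProd ⊤ H)
    fun v ↦ ⟨(v.1, v.2.rev), ?_, ?_⟩, Fintype.card_prod, Fintype.card_fin]
  · obtain ⟨a, b⟩ := v
    fin_cases b <;> simp
  · rw [pair_snd_rev_eq_setOf_fst_eq]
    exact isFairDomSet_top_boxProd_fiber H v.1

end BoxProd

theorem stmt_13 :
    fairCoalitionNumber ((⊤ : SimpleGraph (Fin 3)) □ (⊤ : SimpleGraph (Fin 2))) = 6 :=
  fairCoalitionNumber_top_boxProd_fin_two ⊤
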